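/- Define c(t,a,b) = ∑_{i=1}^{a} ∑_{j=1}^{b} (-1)^{i+j+1} · C(a-i+b-j, a-i) · C(t-1, i-1) · C(t-1, j-1). Then for t ≥ 2 and a, b ≥ 1, the recursion c(t,a,b) = (-1)^{a+b+1} · C(t-2, a-1) · C(t-2, b-1) + c(t-1, a-1, b-1) holds. -/

import Mathlib

/-!
Both sides are coefficients of bivariate generating functions. Since `C(p + q, p)` is the
coefficient of `x ^ p * y ^ q` in `1 / (1 - x - y)`,
`∑ c(s + 1, a, b) x ^ a y ^ b = -x y (1 - x) ^ s (1 - y) ^ s / (1 - x - y)`.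
As `(1 - x) (1 - y) = (1 - x - y) + x y`, the series for `s + 1` is `x y` times the series for `s`
minus `x y (1 - x) ^ s (1 - y) ^ s`; comparing coefficients of `x ^ a y ^ b` gives the recursion.
-/

/-- The double alternating sum `c(t,a,b)`. -/
def c (t a b : ℕ) : ℤ :=
  ∑ i ∈ Finset.Icc 1 a, ∑ j ∈ Finset.Icc 1 b,
    (-1 : ℤ) ^ (i + j + 1) * Nat.choose (a - i + (b - j)) (a - i) *
      Nat.choose (t - 1) (i - 1) * Nat.choose (t - 1) (j - 1)

open PowerSeries Finset

theorem PowerSeries.coeff_one_sub_X_pow {R : Type*} [CommRing R] (s k : ℕ) :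
    coeff k ((1 - X : R⟦X⟧) ^ s) = (-1) ^ k * s.choose k := by
  induction s generalizing k with
  | zero => cases k <;> simp [coeff_one]
  | succ s ih =>
    cases k with
    | zero => simp [pow_succ]
    | succ k =>
      rw [pow_succ, mul_sub, mul_one, map_sub, mul_comm, coeff_succ_X_mul, ih, ih,
        Nat.choose_succ_succ']
      push_cast
      ring

theorem PowerSeries.C_neg_one_pow_mul_natCast {R : Type*} [CommRing R] (n k : ℕ) :
    C ((-1) ^ n * k : R) = (-1) ^ n * k := by
  simp

theorem PowerSeries.one_sub_X_mul_invOneSubPow_succ (S : Type*) [CommRing S] (d : ℕ) :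
    (1 - X : S⟦X⟧) * invOneSubPow S (d + 1) = invOneSubPow S d := by
  simp only [invOneSubPow_eq_inv_one_sub_pow, pow_succ', Units.val_mul]
  exact Units.mul_inv_cancel_left (Units.mkOfMulEqOne (1 - X) (mk 1 : S⟦X⟧) _) _

theorem PowerSeries.coeff_succ_coeff_succ_C_X_mul_X_mul {R : Type*} [CommRing R] (F : R⟦X⟧⟦X⟧)
    (m n : ℕ) :
    coeff (m + 1) (coeff (n + 1) (C X * X * F)) = coeff m (coeff n F) := by
  rw [mul_assoc, coeff_C_mul, coeff_succ_X_mul, coeff_succ_X_mul]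

theorem Finset.sum_Icc_one_eq_sum_antidiagonal {M : Type*} [AddCommMonoid M] (m : ℕ)
    (f : ℕ → M) : ∑ i ∈ Icc 1 (m + 1), f i = ∑ x ∈ antidiagonal m, f (x.1 + 1) := by
  rw [Nat.sum_antidiagonal_eq_sum_range_succ_mk, ← Ico_add_one_right_eq_Icc,
    sum_Ico_eq_sum_range, Nat.add_sub_cancel]
  simp only [add_comm 1]

/-- Series in `x` and `y` are encoded as `ℤ⟦X⟧⟦X⟧` with `x = C X` and `y = X`, so the
coefficient of `x ^ p * y ^ q` in `F` is `coeff p (coeff q F)`. This is `1 / (1 - x - y)`,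
expanded as `∑ q, y ^ q / (1 - x) ^ (q + 1)`. -/
noncomputable def invOneSubXSubY : ℤ⟦X⟧⟦X⟧ := mk fun q => ↑(invOneSubPow ℤ (q + 1))

theorem coeff_invOneSubXSubY (q : ℕ) : coeff q invOneSubXSubY = invOneSubPow ℤ (q + 1) :=
  coeff_mk _ _

theorem one_sub_sub_mul_invOneSubXSubY : (1 - C (X : ℤ⟦X⟧) - X) * invOneSubXSubY = 1 := by
  rw [show (1 : ℤ⟦X⟧⟦X⟧) - C X = C (1 - X) by simp, sub_mul]
  ext q : 1
  cases q with
  | zero =>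
    rw [map_sub, coeff_C_mul, coeff_zero_X_mul, coeff_invOneSubXSubY,
      one_sub_X_mul_invOneSubPow_succ, invOneSubPow_zero]
    simp
  | succ q =>
    rw [map_sub, coeff_C_mul, coeff_succ_X_mul, coeff_invOneSubXSubY, coeff_invOneSubXSubY,
      one_sub_X_mul_invOneSubPow_succ, sub_self]
    simp

noncomputable def cSeries (s : ℕ) : ℤ⟦X⟧⟦X⟧ :=
  -(C X * X * (C ((1 - X) ^ s) * (1 - X) ^ s * invOneSubXSubY))

theorem cSeries_succ (s : ℕ) :
    cSeries (s + 1) = C X * X * cSeries s - C X * X * (C ((1 - X) ^ s) * (1 - X) ^ s) := by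
  simp only [cSeries, pow_succ, map_mul, map_sub, map_one]
  linear_combination (-(C X * X) * (C ((1 - X) ^ s) * (1 - X) ^ s)) * one_sub_sub_mul_invOneSubXSubY

theorem coeff_coeff_one_sub_X_pow_mul_invOneSubXSubY (s m n : ℕ) :
    coeff m (coeff n (C ((1 - X) ^ s) * (1 - X) ^ s * invOneSubXSubY)) =
      ∑ x ∈ antidiagonal m, ∑ y ∈ antidiagonal n,
        (-1 : ℤ) ^ x.1 * s.choose x.1 * ((-1) ^ y.1 * s.choose y.1 * (x.2 + y.2).choose x.2) := by
  rw [mul_assoc, coeff_C_mul, coeff_mul, coeff_mul]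
  simp only [coeff_one_sub_X_pow, ← C_neg_one_pow_mul_natCast, coeff_invOneSubXSubY,
    invOneSubPow_val_succ_eq_mk_add_choose, map_sum, coeff_C_mul, coeff_mk, mul_sum]
  refine sum_congr rfl fun x _ => sum_congr rfl fun y _ => ?_
  rw [add_comm y.2, Nat.choose_symm_add]

theorem coeff_coeff_cSeries (s a b : ℕ) : coeff a (coeff b (cSeries s)) = c (s + 1) a b := by
  rcases a with _ | m
  · simp [cSeries, c, mul_assoc, coeff_C_mul]
  rcases b with _ | n
  · simp [cSeries, c, mul_assoc]
  rw [cSeries, map_neg, map_neg, coeff_succ_coeff_succ_C_X_mul_X_mul,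
    coeff_coeff_one_sub_X_pow_mul_invOneSubXSubY, c, sum_Icc_one_eq_sum_antidiagonal,
    ← sum_neg_distrib]
  refine sum_congr rfl fun x hx => ?_
  rw [sum_Icc_one_eq_sum_antidiagonal, ← mul_sum, ← neg_mul, mul_sum]
  refine sum_congr rfl fun y hy => ?_
  rw [HasAntidiagonal.mem_antidiagonal] at hx hy
  rw [show m + 1 - (x.1 + 1) = x.2 by omega, show n + 1 - (y.1 + 1) = y.2 by omega]
  simp only [Nat.add_sub_cancel, pow_succ, pow_add]
  ring

theorem coeff_coeff_C_one_sub_X_pow_mul_one_sub_X_pow (s m n : ℕ) :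
    coeff m (coeff n (C ((1 - X) ^ s) * (1 - X) ^ s : ℤ⟦X⟧⟦X⟧)) =
      (-1 : ℤ) ^ m * s.choose m * ((-1) ^ n * s.choose n) := by
  rw [coeff_C_mul, coeff_one_sub_X_pow, ← C_neg_one_pow_mul_natCast, coeff_mul_C,
    coeff_one_sub_X_pow]

theorem stmt8 (t a b : ℕ) (ht : 2 ≤ t) (ha : 1 ≤ a) (hb : 1 ≤ b) :
    c t a b =
      (-1 : ℤ) ^ (a + b + 1) * Nat.choose (t - 2) (a - 1) * Nat.choose (t - 2) (b - 1) +
        c (t - 1) (a - 1) (b - 1) := by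
  obtain ⟨s, rfl⟩ : ∃ s, t = s + 2 := ⟨t - 2, by omega⟩
  obtain ⟨m, rfl⟩ : ∃ m, a = m + 1 := ⟨a - 1, by omega⟩
  obtain ⟨n, rfl⟩ : ∃ n, b = n + 1 := ⟨b - 1, by omega⟩
  have hcoeff := congrArg (fun F => coeff (m + 1) (coeff (n + 1) F)) (cSeries_succ s)
  simp only [map_sub, coeff_succ_coeff_succ_C_X_mul_X_mul, coeff_coeff_cSeries,
    coeff_coeff_C_one_sub_X_pow_mul_one_sub_X_pow] at hcoeff
  rw [show s + 2 = s + 1 + 1 from rfl, hcoeff]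
  simp only [Nat.add_sub_cancel, show s + 1 + 1 - 2 = s from rfl, pow_succ, pow_add]
  ring
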